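/- arXiv:2603.17628 — 6 statements merged into one kernel-verified Lean document; each statement's English description precedes it below -/
import Mathlib

section
/- For any probability vector p in the J-simplex, tuning parameters (β, λ) with A = 1 + λ(1-β) > 0 and B = β - λ(1-β) > 0 and 0 ≤ β ≤ 1, the total SD-loss over the J one-hot labels satisfies J^{1-β}/A - ((1+β)/(AB))·max(1, J^{1-B}) + J²/B ≤ Σ_{j=1}^J ℓ_{β,λ}(e_j, p) ≤ J/A - ((1+β)/(AB))·min(1, J^{1-B}) + J²/B. -/
/-!
Summing the loss over the one-hot labels leaves two power sums of `p`:
`∑ⱼ ℓ(eⱼ, p) = (J ∑ pⱼ^(1+β) - ((1+β)/B) ∑ pⱼ^B) / A + J²/B`.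
On the simplex a power sum `∑ pⱼ^c` lies between `1` (the value at a vertex) and `J^(1-c)`
(the value at the barycentre): by monotonicity of `x ↦ x^c` on `[0, 1]` on one side and by
the power-mean inequality on the other, in either order depending on whether `c ≥ 1`.
-/

open Finset

/-- The SD-loss `ℓ_{β,λ}(u, p)` for a label vector `u` and probability vector `p`,
written in terms of `A = 1 + λ(1-β)` and `B = β - λ(1-β)`. -/
noncomputable def sdLoss (A B beta : ℝ) {J : ℕ} (u p : Fin J → ℝ) : ℝ :=
  (1 / A) * ∑ j, (p j ^ (1 + beta) - ((1 + beta) / B) * u j * p j ^ B + A / B)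

/-- The `j`-th one-hot label `e_j`. -/
def oneHot {J : ℕ} (j : Fin J) : Fin J → ℝ := fun k => if k = j then 1 else 0

namespace Real

variable {ι : Type*} {s : Finset ι} {f : ι → ℝ} {p : ℝ}

theorem sum_rpow_le_one_of_sum_eq_one (hf : ∀ i ∈ s, 0 ≤ f i) (hsum : ∑ i ∈ s, f i = 1)
    (hp : 1 ≤ p) : ∑ i ∈ s, f i ^ p ≤ 1 := by
  rw [← hsum]
  refine sum_le_sum fun i hi ↦ rpow_le_self_of_le_one (hf i hi) ?_ hp
  exact hsum ▸ single_le_sum hf hi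

theorem one_le_sum_rpow_of_sum_eq_one (hf : ∀ i ∈ s, 0 ≤ f i) (hsum : ∑ i ∈ s, f i = 1)
    (hp : p ≤ 1) : 1 ≤ ∑ i ∈ s, f i ^ p := by
  conv_lhs => rw [← hsum]
  refine sum_le_sum fun i hi ↦ self_le_rpow_of_le_one (hf i hi) ?_ hp
  exact hsum ▸ single_le_sum hf hi

theorem card_pos_of_sum_eq_one (hsum : ∑ i ∈ s, f i = 1) : (0 : ℝ) < #s := by
  have hs : s.Nonempty := nonempty_of_sum_ne_zero (by rw [hsum]; exact one_ne_zero)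
  exact_mod_cast hs.card_pos

theorem card_rpow_one_sub_le_sum_rpow (hf : ∀ i ∈ s, 0 ≤ f i) (hsum : ∑ i ∈ s, f i = 1)
    (hp : 1 ≤ p) : (#s : ℝ) ^ (1 - p) ≤ ∑ i ∈ s, f i ^ p := by
  have hs := card_pos_of_sum_eq_one hsum
  have h := rpow_sum_le_const_mul_sum_rpow_of_nonneg s hp hf
  rw [hsum, one_rpow] at h
  rw [show 1 - p = -(p - 1) by ring, rpow_neg hs.le]
  exact (inv_le_iff_one_le_mul₀' (by positivity)).mpr h

theorem sum_rpow_le_card_rpow_one_sub (hf : ∀ i ∈ s, 0 ≤ f i) (hsum : ∑ i ∈ s, f i = 1)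
    (hp₀ : 0 < p) (hp₁ : p ≤ 1) : ∑ i ∈ s, f i ^ p ≤ (#s : ℝ) ^ (1 - p) := by
  have hs := card_pos_of_sum_eq_one hsum
  have hS : 0 ≤ ∑ i ∈ s, f i ^ p := sum_nonneg fun i hi ↦ rpow_nonneg (hf i hi) p
  -- the power-mean inequality with exponent `p⁻¹ ≥ 1`, applied to the `f i ^ p`
  have h := rpow_sum_le_const_mul_sum_rpow_of_nonneg s (f := fun i ↦ f i ^ p)
    ((one_le_inv₀ hp₀).mpr hp₁) fun i hi ↦ rpow_nonneg (hf i hi) p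
  rw [sum_congr rfl fun i hi ↦ rpow_rpow_inv (hf i hi) hp₀.ne', hsum, mul_one] at h
  calc ∑ i ∈ s, f i ^ p = ((∑ i ∈ s, f i ^ p) ^ p⁻¹) ^ p := (rpow_inv_rpow hS hp₀.ne').symm
    _ ≤ ((#s : ℝ) ^ (p⁻¹ - 1)) ^ p := by gcongr
    _ = (#s : ℝ) ^ (1 - p) := by
        rw [← rpow_mul hs.le, sub_mul, inv_mul_cancel₀ hp₀.ne', one_mul]

theorem min_one_card_rpow_le_sum_rpow (hf : ∀ i ∈ s, 0 ≤ f i) (hsum : ∑ i ∈ s, f i = 1) :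
    min 1 ((#s : ℝ) ^ (1 - p)) ≤ ∑ i ∈ s, f i ^ p := by
  rcases le_total p 1 with hp | hp
  · exact (min_le_left _ _).trans (one_le_sum_rpow_of_sum_eq_one hf hsum hp)
  · exact (min_le_right _ _).trans (card_rpow_one_sub_le_sum_rpow hf hsum hp)

theorem sum_rpow_le_max_one_card_rpow (hf : ∀ i ∈ s, 0 ≤ f i) (hsum : ∑ i ∈ s, f i = 1)
    (hp : 0 < p) : ∑ i ∈ s, f i ^ p ≤ max 1 ((#s : ℝ) ^ (1 - p)) := by
  rcases le_total p 1 with hp₁ | hp₁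
  · exact (sum_rpow_le_card_rpow_one_sub hf hsum hp hp₁).trans (le_max_right _ _)
  · exact (sum_rpow_le_one_of_sum_eq_one hf hsum hp₁).trans (le_max_left _ _)

end Real

theorem sdLoss_oneHot {J : ℕ} (A B beta : ℝ) (p : Fin J → ℝ) (j : Fin J) :
    sdLoss A B beta (oneHot j) p
      = (∑ k, p k ^ (1 + beta) - (1 + beta) / B * p j ^ B + J * (A / B)) / A := by
  simp only [sdLoss, oneHot, sum_add_distrib, sum_sub_distrib, mul_ite, mul_one, mul_zero,
    ite_mul, zero_mul, sum_ite_eq', mem_univ, if_true, sum_const, card_univ, Fintype.card_fin,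
    nsmul_eq_mul]
  ring

theorem sum_sdLoss_oneHot {J : ℕ} {A : ℝ} (hA : A ≠ 0) (B beta : ℝ) (p : Fin J → ℝ) :
    ∑ j, sdLoss A B beta (oneHot j) p
      = J * (∑ k, p k ^ (1 + beta)) / A - (1 + beta) / (A * B) * ∑ k, p k ^ B
        + (J : ℝ) ^ 2 / B := by
  simp only [sdLoss_oneHot, ← sum_div, sum_add_distrib, sum_sub_distrib, ← mul_sum, sum_const,
    card_univ, Fintype.card_fin, nsmul_eq_mul]
  field_simp

theorem total_sdLoss_bounds_general (J : ℕ) (beta A B : ℝ)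
    (hbeta0 : 0 ≤ beta)
    (hApos : 0 < A) (hBpos : 0 < B)
    (p : Fin J → ℝ) (hp0 : ∀ j, 0 ≤ p j) (hsum : ∑ j, p j = 1) :
    (J : ℝ) ^ (1 - beta) / A - ((1 + beta) / (A * B)) * max 1 ((J : ℝ) ^ (1 - B))
        + (J : ℝ) ^ 2 / B
      ≤ ∑ j, sdLoss A B beta (oneHot j) p ∧
    ∑ j, sdLoss A B beta (oneHot j) p
      ≤ (J : ℝ) / A - ((1 + beta) / (A * B)) * min 1 ((J : ℝ) ^ (1 - B))
        + (J : ℝ) ^ 2 / B := by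
  have hp : ∀ j ∈ univ, 0 ≤ p j := fun j _ ↦ hp0 j
  have hJ : (0 : ℝ) < J := by simpa using Real.card_pos_of_sum_eq_one hsum
  have hc : 1 ≤ 1 + beta := by linarith
  have hS_lower : (J : ℝ) ^ (1 - beta) ≤ J * ∑ j, p j ^ (1 + beta) := by
    have h := Real.card_rpow_one_sub_le_sum_rpow hp hsum hc
    rw [card_univ, Fintype.card_fin] at h
    calc (J : ℝ) ^ (1 - beta) = (J : ℝ) ^ (1 + (1 - (1 + beta))) := by ring_nf
      _ = J * (J : ℝ) ^ (1 - (1 + beta)) := by rw [Real.rpow_add hJ, Real.rpow_one]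
      _ ≤ J * ∑ j, p j ^ (1 + beta) := by gcongr
  have hS_upper : (J : ℝ) * ∑ j, p j ^ (1 + beta) ≤ J :=
    mul_le_of_le_one_right hJ.le (Real.sum_rpow_le_one_of_sum_eq_one hp hsum hc)
  have hT_lower := Real.min_one_card_rpow_le_sum_rpow (p := B) hp hsum
  have hT_upper := Real.sum_rpow_le_max_one_card_rpow hp hsum hBpos
  rw [card_univ, Fintype.card_fin] at hT_lower hT_upper
  rw [sum_sdLoss_oneHot hApos.ne']
  constructor <;> gcongr

/-- Bounds on the total SD-loss over the `J` one-hot labels. -/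
theorem total_sdLoss_bounds (J : ℕ) (hJ : 1 ≤ J) (beta lam A B : ℝ)
    (hbeta0 : 0 ≤ beta) (hbeta1 : beta ≤ 1)
    (hA : A = 1 + lam * (1 - beta)) (hB : B = beta - lam * (1 - beta))
    (hApos : 0 < A) (hBpos : 0 < B)
    (p : Fin J → ℝ) (hp0 : ∀ j, 0 ≤ p j) (hsum : ∑ j, p j = 1) :
    (J : ℝ) ^ (1 - beta) / A - ((1 + beta) / (A * B)) * max 1 ((J : ℝ) ^ (1 - B))
        + (J : ℝ) ^ 2 / B
      ≤ ∑ j, sdLoss A B beta (oneHot j) p ∧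
    ∑ j, sdLoss A B beta (oneHot j) p
      ≤ (J : ℝ) / A - ((1 + beta) / (A * B)) * min 1 ((J : ℝ) ^ (1 - B))
        + (J : ℝ) ^ 2 / B :=
  total_sdLoss_bounds_general J beta A B hbeta0 hApos hBpos p hp0 hsum
end

section
/- The oscillation (maximum minus minimum over p in the simplex) of the total SD-loss Σ_{j=1}^J ℓ_{β,λ}(e_j, p) is at most (1/A)·(J - J^{1-β} + ((1+β)/B)·|1 - J^{1-B}|). -/
open Finset

section aux

variable {J : ℕ} (p : Fin J → ℝ)

lemma sum_rpow_le_one (hp0 : ∀ j, 0 ≤ p j) (hpsum : ∑ j, p j = 1)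
    {r : ℝ} (hr : 1 ≤ r) : ∑ k, p k ^ r ≤ 1 := by
  have h : ∀ k, p k ^ r ≤ p k := by
    intro k
    rcases eq_or_lt_of_le (hp0 k) with h | h
    · rw [← h, Real.zero_rpow (by linarith : r ≠ 0)]
    · have hp1 : p k ≤ 1 := by
        have := Finset.single_le_sum (fun j _ => hp0 j) (Finset.mem_univ k)
        linarith
      calc p k ^ r ≤ p k ^ (1 : ℝ) := Real.rpow_le_rpow_of_exponent_ge h hp1 hr
        _ = p k := Real.rpow_one _
  calc ∑ k, p k ^ r ≤ ∑ k, p k := Finset.sum_le_sum (fun k _ => h k)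
    _ = 1 := hpsum

lemma one_le_sum_rpow (hp0 : ∀ j, 0 ≤ p j) (hpsum : ∑ j, p j = 1)
    {r : ℝ} (hr0 : 0 < r) (hr : r ≤ 1) : 1 ≤ ∑ k, p k ^ r := by
  have h : ∀ k, p k ≤ p k ^ r := by
    intro k
    rcases eq_or_lt_of_le (hp0 k) with h | h
    · rw [← h, Real.zero_rpow (ne_of_gt hr0)]
    · have hp1 : p k ≤ 1 := by
        have := Finset.single_le_sum (fun j _ => hp0 j) (Finset.mem_univ k)
        linarith
      calc p k = p k ^ (1 : ℝ) := (Real.rpow_one _).symm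
        _ ≤ p k ^ r := Real.rpow_le_rpow_of_exponent_ge h hp1 hr
  calc (1 : ℝ) = ∑ k, p k := hpsum.symm
    _ ≤ ∑ k, p k ^ r := Finset.sum_le_sum (fun k _ => h k)

lemma sum_scaled_rpow (hJ : 1 ≤ J) (hp0 : ∀ j, 0 ≤ p j) {r : ℝ} :
    ∑ k, (J : ℝ)⁻¹ * ((J : ℝ) * p k) ^ r = (J : ℝ) ^ (r - 1) * ∑ k, p k ^ r := by
  have hJ0 : (0 : ℝ) < (J : ℝ) := by exact_mod_cast hJ
  rw [Finset.mul_sum]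
  refine Finset.sum_congr rfl (fun k _ => ?_)
  rw [Real.mul_rpow (le_of_lt hJ0) (hp0 k)]
  rw [show (J : ℝ) ^ (r - 1) = (J : ℝ) ^ r * (J : ℝ)⁻¹ by
    rw [sub_eq_add_neg, Real.rpow_add hJ0, Real.rpow_neg_one]]
  ring

lemma jensen_lower (hJ : 1 ≤ J) (hp0 : ∀ j, 0 ≤ p j) (hpsum : ∑ j, p j = 1)
    {r : ℝ} (hr : 1 ≤ r) : (J : ℝ) ^ (1 - r) ≤ ∑ k, p k ^ r := by
  have hJ0 : (0 : ℝ) < (J : ℝ) := by exact_mod_cast hJ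
  have hw : ∑ _k : Fin J, (J : ℝ)⁻¹ = 1 := by
    simp [Finset.sum_const, Finset.card_fin]
    field_simp
  have h := Real.rpow_arith_mean_le_arith_mean_rpow Finset.univ
    (fun _ => (J : ℝ)⁻¹) (fun k => (J : ℝ) * p k)
    (fun i _ => by positivity) hw
    (fun i _ => mul_nonneg (le_of_lt hJ0) (hp0 i)) hr
  have hsum1 : ∑ k : Fin J, (J : ℝ)⁻¹ * ((J : ℝ) * p k) = 1 := by
    have : ∀ k : Fin J, (J : ℝ)⁻¹ * ((J : ℝ) * p k) = p k := by
      intro k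
      field_simp
    rw [Finset.sum_congr rfl (fun k _ => this k), hpsum]
  rw [hsum1, Real.one_rpow, sum_scaled_rpow p hJ hp0] at h
  have hid : (J : ℝ) ^ (1 - r) * (J : ℝ) ^ (r - 1) = 1 := by
    rw [← Real.rpow_add hJ0]
    norm_num
  calc (J : ℝ) ^ (1 - r) = (J : ℝ) ^ (1 - r) * 1 := by ring
    _ ≤ (J : ℝ) ^ (1 - r) * ((J : ℝ) ^ (r - 1) * ∑ k, p k ^ r) :=
        mul_le_mul_of_nonneg_left h (Real.rpow_nonneg (le_of_lt hJ0) _)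
    _ = ((J : ℝ) ^ (1 - r) * (J : ℝ) ^ (r - 1)) * ∑ k, p k ^ r := by ring
    _ = ∑ k, p k ^ r := by rw [hid, one_mul]

lemma jensen_upper (hJ : 1 ≤ J) (hp0 : ∀ j, 0 ≤ p j) (hpsum : ∑ j, p j = 1)
    {r : ℝ} (hr0 : 0 < r) (hr : r ≤ 1) : ∑ k, p k ^ r ≤ (J : ℝ) ^ (1 - r) := by
  have hJ0 : (0 : ℝ) < (J : ℝ) := by exact_mod_cast hJ
  have hw : ∑ _k : Fin J, (J : ℝ)⁻¹ = 1 := by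
    simp [Finset.sum_const, Finset.card_fin]
    field_simp
  have hre : (1 : ℝ) ≤ 1 / r := by
    rw [le_div_iff₀ hr0]; linarith
  have h := Real.rpow_arith_mean_le_arith_mean_rpow Finset.univ
    (fun _ => (J : ℝ)⁻¹) (fun k => ((J : ℝ) * p k) ^ r)
    (fun i _ => by positivity) hw
    (fun i _ => Real.rpow_nonneg (mul_nonneg (le_of_lt hJ0) (hp0 i)) r) hre
  have hz : ∀ k : Fin J, (J : ℝ)⁻¹ * (((J : ℝ) * p k) ^ r) ^ (1 / r) = p k := by
    intro k
    rw [one_div, Real.rpow_rpow_inv (mul_nonneg (le_of_lt hJ0) (hp0 k)) (ne_of_gt hr0)]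
    field_simp
  rw [Finset.sum_congr rfl (fun k _ => hz k), hpsum] at h
  -- h : (∑ J⁻¹ * (J p k)^r) ^ (1/r) ≤ 1
  set X : ℝ := ∑ k, (J : ℝ)⁻¹ * ((J : ℝ) * p k) ^ r with hX
  have hX0 : 0 ≤ X := Finset.sum_nonneg (fun k _ =>
    mul_nonneg (by positivity) (Real.rpow_nonneg (mul_nonneg (le_of_lt hJ0) (hp0 k)) _))
  have hXle : X ≤ 1 := by
    have := Real.rpow_le_rpow (Real.rpow_nonneg hX0 _) h (le_of_lt hr0)
    rwa [Real.one_rpow, one_div, Real.rpow_inv_rpow hX0 (ne_of_gt hr0)] at this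
  rw [hX, sum_scaled_rpow p hJ hp0] at hXle
  have hid : (J : ℝ) ^ (1 - r) * (J : ℝ) ^ (r - 1) = 1 := by
    rw [← Real.rpow_add hJ0]
    norm_num
  calc ∑ k, p k ^ r = ((J : ℝ) ^ (1 - r) * (J : ℝ) ^ (r - 1)) * ∑ k, p k ^ r := by
        rw [hid, one_mul]
    _ = (J : ℝ) ^ (1 - r) * ((J : ℝ) ^ (r - 1) * ∑ k, p k ^ r) := by ring
    _ ≤ (J : ℝ) ^ (1 - r) * 1 :=
        mul_le_mul_of_nonneg_left hXle (Real.rpow_nonneg (le_of_lt hJ0) _)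
    _ = (J : ℝ) ^ (1 - r) := by ring

end aux

/-- The oscillation over the simplex of the total SD-loss `∑ j, ℓ_{β,λ}(e_j, p)`
is at most `(1/A) (J - J^{1-β} + ((1+β)/B) |1 - J^{1-B}|)`. -/
theorem total_sdLoss_oscillation (J : ℕ) (hJ : 1 ≤ J) (beta lam A B : ℝ)
    (hbeta0 : 0 ≤ beta) (hbeta1 : beta ≤ 1)
    (hA : A = 1 + lam * (1 - beta)) (hB : B = beta - lam * (1 - beta))
    (hApos : 0 < A) (hBpos : 0 < B)
    (p q : Fin J → ℝ) (hp0 : ∀ j, 0 ≤ p j) (hpsum : ∑ j, p j = 1)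
    (hq0 : ∀ j, 0 ≤ q j) (hqsum : ∑ j, q j = 1) :
    (∑ j, sdLoss A B beta (oneHot j) p) - (∑ j, sdLoss A B beta (oneHot j) q)
      ≤ (1 / A) * ((J : ℝ) - (J : ℝ) ^ (1 - beta)
          + ((1 + beta) / B) * |1 - (J : ℝ) ^ (1 - B)|) := by
  have hJ0 : (0 : ℝ) < (J : ℝ) := by exact_mod_cast hJ
  have hc0 : 0 ≤ (1 + beta) / B := by positivity
  -- closed form for the total loss
  have key : ∀ (u : Fin J → ℝ), (∀ j, 0 ≤ u j) → (∑ j, u j = 1) →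
      ∑ j, sdLoss A B beta (oneHot j) u
        = (1 / A) * ((J : ℝ) * (∑ k, u k ^ (1 + beta))
            - ((1 + beta) / B) * (∑ k, u k ^ B) + (J : ℝ) ^ 2 * (A / B)) := by
    intro u _ _
    simp only [sdLoss, oneHot]
    rw [← Finset.mul_sum]
    congr 1
    rw [Finset.sum_comm]
    have inner : ∀ k : Fin J,
        (∑ j : Fin J, (u k ^ (1 + beta) - (1 + beta) / B * (if k = j then 1 else 0) * u k ^ B + A / B))
          = (J : ℝ) * u k ^ (1 + beta) - (1 + beta) / B * u k ^ B + (J : ℝ) * (A / B) := by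
      intro k
      rw [Finset.sum_add_distrib, Finset.sum_sub_distrib]
      simp [Finset.sum_ite_eq, Finset.sum_const, Finset.card_fin, mul_comm]
    rw [Finset.sum_congr rfl (fun k _ => inner k), Finset.sum_add_distrib,
      Finset.sum_sub_distrib, ← Finset.mul_sum, ← Finset.mul_sum, Finset.sum_const,
      Finset.card_fin, nsmul_eq_mul]
    ring
  rw [key p hp0 hpsum, key q hq0 hqsum]
  -- bounds on the entropy-like sums
  have h1 : 1 ≤ 1 + beta := by linarith
  have hS1p : ∑ k, p k ^ (1 + beta) ≤ 1 := sum_rpow_le_one p hp0 hpsum h1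
  have hS1q : (J : ℝ) ^ (1 - (1 + beta)) ≤ ∑ k, q k ^ (1 + beta) :=
    jensen_lower q hJ hq0 hqsum h1
  have hS1q' : (J : ℝ) ^ (-beta) ≤ ∑ k, q k ^ (1 + beta) := by
    rw [show -beta = 1 - (1 + beta) by ring]; exact hS1q
  have hpow : (J : ℝ) * (J : ℝ) ^ (-beta) = (J : ℝ) ^ (1 - beta) := by
    rw [sub_eq_add_neg, Real.rpow_add hJ0, Real.rpow_one]
  have hBound1 : (J : ℝ) * (∑ k, p k ^ (1 + beta)) - (J : ℝ) * (∑ k, q k ^ (1 + beta))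
      ≤ (J : ℝ) - (J : ℝ) ^ (1 - beta) := by
    have := mul_le_mul_of_nonneg_left (sub_le_sub hS1p hS1q') (le_of_lt hJ0)
    calc (J : ℝ) * (∑ k, p k ^ (1 + beta)) - (J : ℝ) * (∑ k, q k ^ (1 + beta))
        = (J : ℝ) * ((∑ k, p k ^ (1 + beta)) - (∑ k, q k ^ (1 + beta))) := by ring
      _ ≤ (J : ℝ) * (1 - (J : ℝ) ^ (-beta)) := this
      _ = (J : ℝ) - (J : ℝ) ^ (1 - beta) := by rw [mul_sub, mul_one, hpow]
  have hBound2 : (∑ k, q k ^ B) - (∑ k, p k ^ B) ≤ |1 - (J : ℝ) ^ (1 - B)| := by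
    rcases le_or_gt B 1 with hB1 | hB1
    · have hu : ∑ k, q k ^ B ≤ (J : ℝ) ^ (1 - B) := jensen_upper q hJ hq0 hqsum hBpos hB1
      have hl : 1 ≤ ∑ k, p k ^ B := one_le_sum_rpow p hp0 hpsum hBpos hB1
      have : (∑ k, q k ^ B) - (∑ k, p k ^ B) ≤ -(1 - (J : ℝ) ^ (1 - B)) := by linarith
      exact this.trans (neg_le_abs _)
    · have hu : ∑ k, q k ^ B ≤ 1 := sum_rpow_le_one q hq0 hqsum (le_of_lt hB1)
      have hl : (J : ℝ) ^ (1 - B) ≤ ∑ k, p k ^ B := jensen_lower p hJ hp0 hpsum (le_of_lt hB1)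
      have : (∑ k, q k ^ B) - (∑ k, p k ^ B) ≤ 1 - (J : ℝ) ^ (1 - B) := by linarith
      exact this.trans (le_abs_self _)
  have hBound2' : ((1 + beta) / B) * ((∑ k, q k ^ B) - (∑ k, p k ^ B))
      ≤ ((1 + beta) / B) * |1 - (J : ℝ) ^ (1 - B)| :=
    mul_le_mul_of_nonneg_left hBound2 hc0
  calc (1 / A) * ((J : ℝ) * (∑ k, p k ^ (1 + beta)) - ((1 + beta) / B) * (∑ k, p k ^ B)
          + (J : ℝ) ^ 2 * (A / B))
        - (1 / A) * ((J : ℝ) * (∑ k, q k ^ (1 + beta)) - ((1 + beta) / B) * (∑ k, q k ^ B)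
          + (J : ℝ) ^ 2 * (A / B))
      = (1 / A) * (((J : ℝ) * (∑ k, p k ^ (1 + beta)) - (J : ℝ) * (∑ k, q k ^ (1 + beta)))
          + ((1 + beta) / B) * ((∑ k, q k ^ B) - (∑ k, p k ^ B))) := by ring
    _ ≤ (1 / A) * ((J : ℝ) - (J : ℝ) ^ (1 - beta)
          + ((1 + beta) / B) * |1 - (J : ℝ) ^ (1 - B)|) :=
        mul_le_mul_of_nonneg_left (by linarith) (by positivity)
end

section
/- For two probability mass functions g and f on a finite set with f and g strictly positive, tuning parameters satisfying A = 1+λ(1-β) > 0 and B = β-λ(1-β) > 0, the S-divergence S_{β,λ}(g,f) = (1/A) Σ f^{1+β} − ((1+β)/(AB)) Σ f^B g^A + (1/B) Σ g^{1+β} is nonnegative, and equals zero if and only if g = f. -/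
open Finset

/-- The S-divergence `S_{β,λ}(g, f)` in terms of `A = 1 + λ(1-β)` and `B = β - λ(1-β)`. -/
noncomputable def sDiv {Y : Type*} [Fintype Y] (A B beta : ℝ) (g f : Y → ℝ) : ℝ :=
  (1 / A) * ∑ u, f u ^ (1 + beta)
    - ((1 + beta) / (A * B)) * ∑ u, f u ^ B * g u ^ A
    + (1 / B) * ∑ u, g u ^ (1 + beta)

/-! Nonnegativity is Young's inequality `b^B a^A ≤ (B/s) b^s + (A/s) a^s` (with `s = A + B`),
applied pointwise; it is strict unless `a = b`, so the divergence vanishes only when `g = f`. -/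

open Real

noncomputable def youngGap (A B a b : ℝ) : ℝ :=
  (1 / A) * b ^ (A + B) - ((A + B) / (A * B)) * (b ^ B * a ^ A) + (1 / B) * a ^ (A + B)

section youngGap

variable {A B a b : ℝ}

lemma youngGap_eq_mul_geom_arith_gap (hA : 0 < A) (hB : 0 < B) (ha : 0 ≤ a) (hb : 0 ≤ b) :
    youngGap A B a b = (A + B) / (A * B) *
      (B / (A + B) * b ^ (A + B) + A / (A + B) * a ^ (A + B)
        - (b ^ (A + B)) ^ (B / (A + B)) * (a ^ (A + B)) ^ (A / (A + B))) := by
  have hs : A + B ≠ 0 := by positivity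
  rw [← rpow_mul hb, ← rpow_mul ha, mul_div_cancel₀ _ hs, mul_div_cancel₀ _ hs, youngGap]
  field_simp
  ring

lemma youngGap_nonneg (hA : 0 < A) (hB : 0 < B) (ha : 0 ≤ a) (hb : 0 ≤ b) :
    0 ≤ youngGap A B a b := by
  rw [youngGap_eq_mul_geom_arith_gap hA hB ha hb]
  refine mul_nonneg (by positivity) (sub_nonneg.2 ?_)
  exact geom_mean_le_arith_mean2_weighted (by positivity) (by positivity)
    (by positivity) (by positivity) (by field_simp; ring)

lemma youngGap_pos_iff (hA : 0 < A) (hB : 0 < B) (ha : 0 ≤ a) (hb : 0 ≤ b) :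
    0 < youngGap A B a b ↔ a ≠ b := by
  rw [youngGap_eq_mul_geom_arith_gap hA hB ha hb, mul_pos_iff_of_pos_left (by positivity),
    sub_pos, geom_mean_lt_arith_mean2_weighted_iff_of_pos (by positivity) (by positivity)
      (by positivity) (by positivity) (by field_simp; ring),
    Ne, rpow_left_inj hb ha (by positivity), eq_comm]

lemma youngGap_eq_zero_iff (hA : 0 < A) (hB : 0 < B) (ha : 0 ≤ a) (hb : 0 ≤ b) :
    youngGap A B a b = 0 ↔ a = b := by
  rw [← not_iff_not, ← Ne, ← (youngGap_nonneg hA hB ha hb).lt_iff_ne',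
    youngGap_pos_iff hA hB ha hb]

end youngGap

lemma sDiv_eq_sum_youngGap {Y : Type*} [Fintype Y] {A B beta : ℝ} (hs : A + B = 1 + beta)
    (g f : Y → ℝ) : sDiv A B beta g f = ∑ u, youngGap A B (g u) (f u) := by
  simp only [sDiv, youngGap, ← hs, mul_sum, sum_add_distrib, sum_sub_distrib]

theorem sDiv_nonneg_eq_zero_iff_general {Y : Type*} [Fintype Y] (beta lam A B : ℝ)
    (hA : A = 1 + lam * (1 - beta)) (hB : B = beta - lam * (1 - beta))
    (hApos : 0 < A) (hBpos : 0 < B)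
    (g f : Y → ℝ) (hg : ∀ u, 0 < g u) (hf : ∀ u, 0 < f u) :
    0 ≤ sDiv A B beta g f ∧ (sDiv A B beta g f = 0 ↔ g = f) := by
  have hs : A + B = 1 + beta := by rw [hA, hB]; ring
  have hgap : ∀ u, 0 ≤ youngGap A B (g u) (f u) :=
    fun u => youngGap_nonneg hApos hBpos (hg u).le (hf u).le
  rw [sDiv_eq_sum_youngGap hs]
  refine ⟨sum_nonneg fun u _ => hgap u, ?_⟩
  rw [Fintype.sum_eq_zero_iff_of_nonneg hgap, funext_iff, funext_iff]
  exact forall_congr' fun u => youngGap_eq_zero_iff hApos hBpos (hg u).le (hf u).le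

/-- The S-divergence between two strictly positive PMFs on a finite set is nonnegative,
and equals zero iff the PMFs coincide. -/
theorem sDiv_nonneg_eq_zero_iff {Y : Type*} [Fintype Y] (beta lam A B : ℝ)
    (hbeta0 : 0 ≤ beta) (hbeta1 : beta ≤ 1)
    (hA : A = 1 + lam * (1 - beta)) (hB : B = beta - lam * (1 - beta))
    (hApos : 0 < A) (hBpos : 0 < B)
    (g f : Y → ℝ) (hg : ∀ u, 0 < g u) (hf : ∀ u, 0 < f u)
    (hgsum : ∑ u, g u = 1) (hfsum : ∑ u, f u = 1) :
    0 ≤ sDiv A B beta g f ∧ (sDiv A B beta g f = 0 ↔ g = f) :=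
  sDiv_nonneg_eq_zero_iff_general beta lam A B hA hB hApos hBpos g f hg hf
end

section
/- Under uniform label noise with rate η, the noisy risk decomposes as R^η(θ) = (1 − Jη/(J−1))·R(θ) + (η/(J−1))·T(θ), where R(θ) is the clean expected loss and T(θ) is the expected total loss over all J labels. -/
open Finset

/-- Under uniform label noise with rate `η`, the noisy risk decomposes as
`R^η(θ) = (1 - Jη/(J-1)) R(θ) + (η/(J-1)) T(θ)`, where `R` is the clean risk and
`T` is the total loss over all `J` labels. -/
theorem noisy_risk_decomposition {Θ : Type*} (J : ℕ) (hJ : 2 ≤ J) (eta : ℝ)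
    (q : Fin J → ℝ) (hqsum : ∑ j, q j = 1)
    (ℓ : Fin J → Θ → ℝ) (θ : Θ) :
    ∑ j, ((1 - eta) * q j + (eta / ((J : ℝ) - 1)) * (1 - q j)) * ℓ j θ
      = (1 - (J : ℝ) * eta / ((J : ℝ) - 1)) * (∑ j, q j * ℓ j θ)
        + (eta / ((J : ℝ) - 1)) * (∑ j, ℓ j θ) := by
  have hJ1 : (J : ℝ) - 1 ≠ 0 := by
    have : (2 : ℝ) ≤ (J : ℝ) := by exact_mod_cast hJ
    linarith
  have expand : ∀ j : Fin J,
      ((1 - eta) * q j + (eta / ((J : ℝ) - 1)) * (1 - q j)) * ℓ j θ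
      = (1 - (J : ℝ) * eta / ((J : ℝ) - 1)) * (q j * ℓ j θ)
        + (eta / ((J : ℝ) - 1)) * ℓ j θ := by
    intro j
    field_simp
    ring
  rw [Finset.sum_congr rfl (fun j _ => expand j), Finset.sum_add_distrib,
    ← Finset.mul_sum, ← Finset.mul_sum]
end

section
/- Suppose the noisy risk satisfies R^η(θ) = c·R(θ) + d·T(θ) with c = 1 − Jη/(J−1) > 0 and d = η/(J−1) ≥ 0, and suppose T is bounded: T_min ≤ T(θ) ≤ T_max for all θ. If θ* minimizes R and θ^η minimizes R^η, then 0 ≤ R(θ^η) − R(θ*) ≤ (d/c)·(T_max − T_min) = (η/(J−1−Jη))·(T_max − T_min). -/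
/-- If the noisy risk decomposes as `R^η = c R + d T` with
`c = 1 - Jη/(J-1) > 0`, `d = η/(J-1) ≥ 0`, and `T` is bounded between `Tmin` and `Tmax`,
then the excess clean risk of any minimizer of the noisy risk satisfies
`0 ≤ R(θ^η) - R(θ*) ≤ (η/(J-1-Jη)) (Tmax - Tmin)`. -/
theorem excess_risk_bound_abstract {Θ : Type*} (J : ℕ) (hJ : 2 ≤ J) (eta : ℝ)
    (c d : ℝ) (hc : c = 1 - (J : ℝ) * eta / ((J : ℝ) - 1)) (hd : d = eta / ((J : ℝ) - 1))
    (hcpos : 0 < c) (hdnn : 0 ≤ d)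
    (R Rη T : Θ → ℝ) (hdecomp : ∀ θ, Rη θ = c * R θ + d * T θ)
    (Tmin Tmax : ℝ) (hT : ∀ θ, Tmin ≤ T θ ∧ T θ ≤ Tmax)
    (θs θη : Θ) (hθs : ∀ θ, R θs ≤ R θ) (hθη : ∀ θ, Rη θη ≤ Rη θ) :
    0 ≤ R θη - R θs ∧
    R θη - R θs ≤ (d / c) * (Tmax - Tmin) ∧
    (d / c) * (Tmax - Tmin) = (eta / ((J : ℝ) - 1 - (J : ℝ) * eta)) * (Tmax - Tmin) := by
  have hJ1 : (1 : ℝ) < (J : ℝ) := by exact_mod_cast Nat.lt_of_lt_of_le Nat.one_lt_two hJ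
  have hJne : (J : ℝ) - 1 ≠ 0 := by linarith
  have h1 := hθη θs
  rw [hdecomp θη, hdecomp θs] at h1
  have hTη := hT θη
  have hTs := hT θs
  have key : c * (R θη - R θs) ≤ d * (Tmax - Tmin) := by
    nlinarith [mul_nonneg hdnn (sub_nonneg.2 hTη.1), mul_nonneg hdnn (sub_nonneg.2 hTs.2)]
  refine ⟨by linarith [hθs θη], ?_, ?_⟩
  · rw [div_mul_eq_mul_div, le_div_iff₀ hcpos]
    nlinarith
  · have hcd : c = ((J : ℝ) - 1 - (J : ℝ) * eta) / ((J : ℝ) - 1) := by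
      rw [hc]; field_simp
    have hden : (J : ℝ) - 1 - (J : ℝ) * eta ≠ 0 := by
      intro h
      rw [hcd, h, zero_div] at hcpos
      exact lt_irrefl 0 hcpos
    rw [hd, hcd]
    field_simp
end

section
/- The excess clean SD-risk of the noisy-risk minimizer under uniform label noise with rate η ∈ [0, (J−1)/J) is bounded: 0 ≤ R_{β,λ}(θ^η) − R_{β,λ}(θ*) ≤ (η/(J−1−Jη))·(1/A)·(J − J^{1-β} + ((1+β)/B)·|1 − J^{1-B}|). -/
open Finset

lemma simplex_le_one {J : ℕ} (p : Fin J → ℝ) (hp0 : ∀ j, 0 ≤ p j)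
    (hps : ∑ j, p j = 1) (j : Fin J) : p j ≤ 1 := by
  have := Finset.single_le_sum (f := p) (fun i _ => hp0 i) (Finset.mem_univ j)
  linarith [hps ▸ this]

lemma simplex_sum_rpow_le_one {J : ℕ} (p : Fin J → ℝ) (hp0 : ∀ j, 0 ≤ p j)
    (hps : ∑ j, p j = 1) {t : ℝ} (ht : 1 ≤ t) : ∑ j, p j ^ t ≤ 1 := by
  calc ∑ j, p j ^ t ≤ ∑ j, p j := by
        apply Finset.sum_le_sum
        intro j _
        rcases eq_or_lt_of_le (hp0 j) with h | h
        · rw [← h, Real.zero_rpow (by linarith : t ≠ 0)]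
        · calc p j ^ t ≤ p j ^ (1:ℝ) :=
                Real.rpow_le_rpow_of_exponent_ge h (simplex_le_one p hp0 hps j) ht
            _ = p j := Real.rpow_one _
    _ = 1 := hps

lemma simplex_one_le_sum_rpow {J : ℕ} (p : Fin J → ℝ) (hp0 : ∀ j, 0 ≤ p j)
    (hps : ∑ j, p j = 1) {t : ℝ} (ht0 : 0 < t) (ht1 : t ≤ 1) : 1 ≤ ∑ j, p j ^ t := by
  calc (1:ℝ) = ∑ j, p j := hps.symm
    _ ≤ ∑ j, p j ^ t := by
        apply Finset.sum_le_sum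
        intro j _
        rcases eq_or_lt_of_le (hp0 j) with h | h
        · rw [← h, Real.zero_rpow ht0.ne']
        · calc p j = p j ^ (1:ℝ) := (Real.rpow_one _).symm
            _ ≤ p j ^ t :=
                Real.rpow_le_rpow_of_exponent_ge h (simplex_le_one p hp0 hps j) ht1

lemma simplex_rpow_card_le {J : ℕ} (hJ : 0 < J) (p : Fin J → ℝ) (hp0 : ∀ j, 0 ≤ p j)
    (hps : ∑ j, p j = 1) {t : ℝ} (ht : 1 ≤ t) : (J:ℝ) ^ (1 - t) ≤ ∑ j, p j ^ t := by
  have hJR : (0:ℝ) < J := by exact_mod_cast hJ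
  have hw' : ∑ _i : Fin J, 1/(J:ℝ) = 1 := by
    rw [Finset.sum_const, Finset.card_univ, Fintype.card_fin, nsmul_eq_mul]
    field_simp
  have h0 := Real.rpow_arith_mean_le_arith_mean_rpow Finset.univ (fun _ => 1/(J:ℝ)) p
    (fun i _ => by positivity) hw' (fun i _ => hp0 i) ht
  have h : (1/(J:ℝ)) ^ t ≤ (1/(J:ℝ)) * ∑ j, p j ^ t := by
    simpa [← Finset.mul_sum, hps] using h0
  have e1 : (J:ℝ) ^ (1 - t) = (J:ℝ) * (1/(J:ℝ)) ^ t := by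
    rw [Real.rpow_sub hJR, Real.rpow_one, one_div, Real.inv_rpow hJR.le]
    field_simp
  rw [e1]
  calc (J:ℝ) * (1/(J:ℝ)) ^ t ≤ (J:ℝ) * ((1/(J:ℝ)) * ∑ j, p j ^ t) :=
        mul_le_mul_of_nonneg_left h hJR.le
    _ = ∑ j, p j ^ t := by field_simp

lemma simplex_sum_rpow_le_card {J : ℕ} (hJ : 0 < J) (p : Fin J → ℝ) (hp0 : ∀ j, 0 ≤ p j)
    (hps : ∑ j, p j = 1) {t : ℝ} (ht0 : 0 < t) (ht1 : t ≤ 1) :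
    ∑ j, p j ^ t ≤ (J:ℝ) ^ (1 - t) := by
  have hJR : (0:ℝ) < J := by exact_mod_cast hJ
  have hw' : ∑ _i : Fin J, 1/(J:ℝ) = 1 := by
    rw [Finset.sum_const, Finset.card_univ, Fintype.card_fin, nsmul_eq_mul]
    field_simp
  have hS0 : 0 ≤ ∑ j, p j ^ t :=
    Finset.sum_nonneg fun j _ => Real.rpow_nonneg (hp0 j) t
  have hcanc : ∀ j : Fin J, (p j ^ t) ^ (1/t) = p j := by
    intro j
    rw [← Real.rpow_mul (hp0 j), mul_one_div_cancel ht0.ne', Real.rpow_one]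
  have h0 := Real.rpow_arith_mean_le_arith_mean_rpow Finset.univ (fun _ => 1/(J:ℝ))
    (fun j => p j ^ t) (fun i _ => by positivity) hw'
    (fun i _ => Real.rpow_nonneg (hp0 i) t) (one_le_one_div ht0 ht1)
  have h1 : ((1/(J:ℝ)) * ∑ j, p j ^ t) ^ (1/t) ≤ 1/(J:ℝ) := by
    calc ((1/(J:ℝ)) * ∑ j, p j ^ t) ^ (1/t)
        = (∑ j, (1/(J:ℝ)) * p j ^ t) ^ (1/t) := by rw [Finset.mul_sum]
      _ ≤ ∑ j, (1/(J:ℝ)) * (p j ^ t) ^ (1/t) := h0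
      _ = 1/(J:ℝ) := by
          simp only [hcanc]
          rw [← Finset.mul_sum, hps, mul_one]
  have h2 : (1/(J:ℝ)) * ∑ j, p j ^ t ≤ (1/(J:ℝ)) ^ t := by
    have hx0 : (0:ℝ) ≤ (1/(J:ℝ)) * ∑ j, p j ^ t := by positivity
    have h3 := Real.rpow_le_rpow (Real.rpow_nonneg hx0 _) h1 ht0.le
    rwa [← Real.rpow_mul hx0, one_div_mul_cancel ht0.ne', Real.rpow_one] at h3
  have e1 : (J:ℝ) ^ (1 - t) = (J:ℝ) * (1/(J:ℝ)) ^ t := by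
    rw [Real.rpow_sub hJR, Real.rpow_one, one_div, Real.inv_rpow hJR.le]
    field_simp
  calc ∑ j, p j ^ t = (J:ℝ) * ((1/(J:ℝ)) * ∑ j, p j ^ t) := by field_simp
    _ ≤ (J:ℝ) * (1/(J:ℝ)) ^ t := mul_le_mul_of_nonneg_left h2 hJR.le
    _ = (J:ℝ) ^ (1 - t) := e1.symm

open Finset

/-- Excess clean SD-risk of the noisy-risk minimizer under uniform label noise with
rate `η ∈ [0, (J-1)/J)` is bounded by
`(η/(J-1-Jη)) (1/A) (J - J^{1-β} + ((1+β)/B) |1 - J^{1-B}|)`. -/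
theorem rSDNet_excess_risk_bound {Θ : Type*} (J : ℕ) (hJ : 2 ≤ J)
    (beta lam A B : ℝ) (hbeta0 : 0 ≤ beta) (hbeta1 : beta ≤ 1)
    (hA : A = 1 + lam * (1 - beta)) (hB : B = beta - lam * (1 - beta))
    (hApos : 0 < A) (hBpos : 0 < B)
    (eta : ℝ) (heta0 : 0 ≤ eta) (heta : eta < ((J : ℝ) - 1) / J)
    (q : Fin J → ℝ) (hq0 : ∀ j, 0 ≤ q j) (hqsum : ∑ j, q j = 1)
    (p : Θ → Fin J → ℝ) (hp0 : ∀ θ j, 0 ≤ p θ j) (hpsum : ∀ θ, ∑ j, p θ j = 1)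
    (R Rη : Θ → ℝ)
    (hR : ∀ θ, R θ = ∑ j, q j * sdLoss A B beta (oneHot j) (p θ))
    (hRη : ∀ θ, Rη θ = ∑ j,
      ((1 - eta) * q j + (eta / ((J : ℝ) - 1)) * (1 - q j)) * sdLoss A B beta (oneHot j) (p θ))
    (θs θη : Θ) (hθs : ∀ θ, R θs ≤ R θ) (hθη : ∀ θ, Rη θη ≤ Rη θ) :
    0 ≤ R θη - R θs ∧
    R θη - R θs ≤ (eta / ((J : ℝ) - 1 - (J : ℝ) * eta)) * (1 / A) *
      ((J : ℝ) - (J : ℝ) ^ (1 - beta) + ((1 + beta) / B) * |1 - (J : ℝ) ^ (1 - B)|) := by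
  have hJ0 : 0 < J := by omega
  have hJR : (0:ℝ) < J := by exact_mod_cast hJ0
  have hJ1 : (1:ℝ) < (J:ℝ) := by exact_mod_cast (by omega : 1 < J)
  have hJm1 : (0:ℝ) < (J:ℝ) - 1 := by linarith
  have hc : (0:ℝ) < (J:ℝ) - 1 - (J:ℝ) * eta := by
    rw [lt_div_iff₀ hJR] at heta; linarith
  -- explicit formula for the total loss S θ
  have hS : ∀ θ, ∑ j, sdLoss A B beta (oneHot j) (p θ)
      = (1/A) * ((J:ℝ) * (∑ k, p θ k ^ (1+beta))
          - ((1+beta)/B) * (∑ k, p θ k ^ B) + (J:ℝ)^2 * (A/B)) := by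
    intro θ
    have inner : ∀ j : Fin J,
        ∑ k, (p θ k ^ (1+beta) - (1+beta)/B * oneHot j k * p θ k ^ B + A/B)
        = (∑ k, p θ k ^ (1+beta)) - ((1+beta)/B) * p θ j ^ B + (J:ℝ) * (A/B) := by
      intro j
      rw [Finset.sum_add_distrib, Finset.sum_sub_distrib, Finset.sum_const,
        Finset.card_univ, Fintype.card_fin, nsmul_eq_mul]
      congr 2
      simp [oneHot, mul_assoc, ite_mul, Finset.mul_sum]
    simp only [sdLoss, ← Finset.mul_sum]
    congr 1
    rw [Finset.sum_congr rfl (fun j _ => inner j), Finset.sum_add_distrib,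
      Finset.sum_sub_distrib, Finset.sum_const, Finset.card_univ, Fintype.card_fin,
      nsmul_eq_mul, ← Finset.mul_sum, Finset.sum_const, Finset.card_univ,
      Fintype.card_fin, nsmul_eq_mul]
    ring
  -- decomposition of the noisy risk
  have hRel : ∀ θ, Rη θ = (1 - eta - eta/((J:ℝ)-1)) * R θ
      + (eta/((J:ℝ)-1)) * ∑ j, sdLoss A B beta (oneHot j) (p θ) := by
    intro θ
    rw [hRη θ, hR θ, Finset.mul_sum, Finset.mul_sum, ← Finset.sum_add_distrib]
    exact Finset.sum_congr rfl fun j _ => by ring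
  have h1 := hθη θs
  rw [hRel θη, hRel θs] at h1
  have h1' : (1 - eta - eta/((J:ℝ)-1)) * (R θη - R θs)
      ≤ (eta/((J:ℝ)-1)) * ((∑ j, sdLoss A B beta (oneHot j) (p θs))
        - (∑ j, sdLoss A B beta (oneHot j) (p θη))) := by linarith
  have key : ((J:ℝ) - 1 - (J:ℝ) * eta) * (R θη - R θs)
      ≤ eta * ((∑ j, sdLoss A B beta (oneHot j) (p θs))
        - (∑ j, sdLoss A B beta (oneHot j) (p θη))) := by
    have hc0 : ((J:ℝ)-1) * (1 - eta - eta/((J:ℝ)-1)) = (J:ℝ) - 1 - (J:ℝ)*eta := by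
      field_simp; ring
    have hd : ((J:ℝ)-1) * (eta/((J:ℝ)-1)) = eta := by field_simp
    calc ((J:ℝ) - 1 - (J:ℝ) * eta) * (R θη - R θs)
        = ((J:ℝ)-1) * ((1 - eta - eta/((J:ℝ)-1)) * (R θη - R θs)) := by
          rw [← mul_assoc, hc0]
      _ ≤ ((J:ℝ)-1) * ((eta/((J:ℝ)-1)) * (_ - _)) := mul_le_mul_of_nonneg_left h1' hJm1.le
      _ = eta * (_ - _) := by rw [← mul_assoc, hd]
  -- bounds for F and G
  have hone_beta : (1:ℝ) ≤ 1 + beta := by linarith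
  have hF2 : (∑ k, p θs k ^ (1+beta)) ≤ 1 :=
    simplex_sum_rpow_le_one _ (hp0 θs) (hpsum θs) hone_beta
  have hF1 : (J:ℝ) ^ (1 - (1+beta)) ≤ ∑ k, p θη k ^ (1+beta) :=
    simplex_rpow_card_le hJ0 _ (hp0 θη) (hpsum θη) hone_beta
  have hJF : (J:ℝ) * (J:ℝ) ^ (1 - (1+beta)) = (J:ℝ) ^ (1 - beta) := by
    rw [show (1:ℝ) - (1+beta) = -beta by ring,
      show (1:ℝ) - beta = 1 + -beta by ring, Real.rpow_add hJR, Real.rpow_one]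
  have hG : |(∑ k, p θs k ^ B) - (∑ k, p θη k ^ B)| ≤ |1 - (J:ℝ) ^ (1 - B)| := by
    rcases le_total B 1 with hBle | hBge
    · have hJB : (1:ℝ) ≤ (J:ℝ) ^ (1 - B) := by
        have h5 := Real.rpow_le_rpow_of_exponent_le hJ1.le (by linarith : (0:ℝ) ≤ 1 - B)
        rwa [Real.rpow_zero] at h5
      have g1 := simplex_one_le_sum_rpow _ (hp0 θs) (hpsum θs) hBpos hBle
      have g2 := simplex_one_le_sum_rpow _ (hp0 θη) (hpsum θη) hBpos hBle
      have g3 := simplex_sum_rpow_le_card hJ0 _ (hp0 θs) (hpsum θs) hBpos hBle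
      have g4 := simplex_sum_rpow_le_card hJ0 _ (hp0 θη) (hpsum θη) hBpos hBle
      rw [abs_sub_le_iff, abs_of_nonpos (by linarith)]
      constructor <;> linarith
    · have hJB : (J:ℝ) ^ (1 - B) ≤ 1 :=
        Real.rpow_le_one_of_one_le_of_nonpos hJ1.le (by linarith)
      have g1 := simplex_sum_rpow_le_one _ (hp0 θs) (hpsum θs) hBge
      have g2 := simplex_sum_rpow_le_one _ (hp0 θη) (hpsum θη) hBge
      have g3 := simplex_rpow_card_le hJ0 _ (hp0 θs) (hpsum θs) hBge
      have g4 := simplex_rpow_card_le hJ0 _ (hp0 θη) (hpsum θη) hBge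
      rw [abs_sub_le_iff, abs_of_nonneg (by linarith)]
      constructor <;> linarith
  have hcB : (0:ℝ) ≤ (1+beta)/B := by positivity
  have hSbound : (∑ j, sdLoss A B beta (oneHot j) (p θs))
      - (∑ j, sdLoss A B beta (oneHot j) (p θη))
      ≤ (1/A) * ((J:ℝ) - (J:ℝ) ^ (1 - beta) + ((1+beta)/B) * |1 - (J:ℝ) ^ (1 - B)|) := by
    rw [hS θs, hS θη]
    have e : (1/A) * ((J:ℝ) * (∑ k, p θs k ^ (1+beta))
          - ((1+beta)/B) * (∑ k, p θs k ^ B) + (J:ℝ)^2 * (A/B))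
        - (1/A) * ((J:ℝ) * (∑ k, p θη k ^ (1+beta))
          - ((1+beta)/B) * (∑ k, p θη k ^ B) + (J:ℝ)^2 * (A/B))
        = (1/A) * ((J:ℝ) * ((∑ k, p θs k ^ (1+beta)) - (∑ k, p θη k ^ (1+beta)))
          - ((1+beta)/B) * ((∑ k, p θs k ^ B) - (∑ k, p θη k ^ B))) := by ring
    rw [e]
    apply mul_le_mul_of_nonneg_left _ (by positivity : (0:ℝ) ≤ 1/A)
    have b1 : (J:ℝ) * ((∑ k, p θs k ^ (1+beta)) - (∑ k, p θη k ^ (1+beta)))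
        ≤ (J:ℝ) - (J:ℝ) ^ (1 - beta) := by
      have := mul_le_mul_of_nonneg_left (by linarith : (∑ k, p θs k ^ (1+beta))
        - (∑ k, p θη k ^ (1+beta)) ≤ 1 - (J:ℝ) ^ (1 - (1+beta))) hJR.le
      calc (J:ℝ) * ((∑ k, p θs k ^ (1+beta)) - (∑ k, p θη k ^ (1+beta)))
          ≤ (J:ℝ) * (1 - (J:ℝ) ^ (1 - (1+beta))) := this
        _ = (J:ℝ) - (J:ℝ) ^ (1 - beta) := by rw [mul_sub, hJF, mul_one]
    have b2 : -(((1+beta)/B) * ((∑ k, p θs k ^ B) - (∑ k, p θη k ^ B)))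
        ≤ ((1+beta)/B) * |1 - (J:ℝ) ^ (1 - B)| := by
      calc -(((1+beta)/B) * ((∑ k, p θs k ^ B) - (∑ k, p θη k ^ B)))
          = ((1+beta)/B) * (-((∑ k, p θs k ^ B) - (∑ k, p θη k ^ B))) := by ring
        _ ≤ ((1+beta)/B) * |1 - (J:ℝ) ^ (1 - B)| := by
            apply mul_le_mul_of_nonneg_left _ hcB
            calc -((∑ k, p θs k ^ B) - (∑ k, p θη k ^ B))
                ≤ |(∑ k, p θs k ^ B) - (∑ k, p θη k ^ B)| := neg_le_abs _
              _ ≤ |1 - (J:ℝ) ^ (1 - B)| := hG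
    linarith
  refine ⟨by linarith [hθs θη], ?_⟩
  have final : ((J:ℝ) - 1 - (J:ℝ) * eta) * (R θη - R θs)
      ≤ eta * ((1/A) * ((J:ℝ) - (J:ℝ) ^ (1 - beta)
        + ((1+beta)/B) * |1 - (J:ℝ) ^ (1 - B)|)) :=
    key.trans (mul_le_mul_of_nonneg_left hSbound heta0)
  rw [show (eta / ((J : ℝ) - 1 - (J : ℝ) * eta)) * (1 / A) *
      ((J : ℝ) - (J : ℝ) ^ (1 - beta) + ((1 + beta) / B) * |1 - (J : ℝ) ^ (1 - B)|)
    = (eta * ((1/A) * ((J:ℝ) - (J:ℝ) ^ (1 - beta)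
        + ((1+beta)/B) * |1 - (J:ℝ) ^ (1 - B)|))) / ((J:ℝ) - 1 - (J:ℝ) * eta) by ring]
  rw [le_div_iff₀ hc]
  linarith [final]
end
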